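/- arXiv:2011.14455 — 5 statements merged into one kernel-verified Lean document; each statement's English description precedes it below -/
import Mathlib

section
/- Let 0 < α < 1, γ > 0, and let h : (0,∞) → ℝ be a nonnegative integrable solution of h(x) = (γ/x) ∫₀ˣ h(u)/(x−αu)^γ du with ∫₀^∞ h = 1. Then the cumulative distribution function f(x) = ∫₀ˣ h(u) du satisfies γ x^(−γ−1) f(x) ≤ h(x) ≤ γ (1−α)^(−γ) x^(−γ−1) f(x) for all x > 0. -/
open MeasureTheory Real

theorem density_cdf_bounds (α γ : ℝ) (hα : 0 < α) (hα1 : α < 1) (hγ : 0 < γ)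
    (h : ℝ → ℝ)
    (hpos : ∀ x, 0 ≤ h x)
    (hint : IntegrableOn h (Set.Ioi (0 : ℝ)))
    (hnorm : ∫ u in Set.Ioi (0 : ℝ), h u = 1)
    (heqn : ∀ x > (0 : ℝ), h x = (γ / x) * ∫ u in Set.Ioo (0 : ℝ) x, h u / (x - α * u) ^ γ)
    (f : ℝ → ℝ)
    (hf : ∀ x, f x = ∫ u in Set.Ioo (0 : ℝ) x, h u) :
    ∀ x > (0 : ℝ),
      γ * x ^ (-γ - 1) * f x ≤ h x ∧ h x ≤ γ * (1 - α) ^ (-γ) * x ^ (-γ - 1) * f x := by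
  intro x hx
  have h1α : (0:ℝ) < 1 - α := by linarith
  have hxg : (0:ℝ) < x ^ γ := Real.rpow_pos_of_pos hx γ
  have hcpos : (0:ℝ) < ((1 - α) * x) ^ γ := Real.rpow_pos_of_pos (by positivity) γ
  have hintx : IntegrableOn h (Set.Ioo 0 x) := hint.mono_set Set.Ioo_subset_Ioi_self
  have key : ∀ u ∈ Set.Ioo (0:ℝ) x,
      ((1-α)*x) ^ γ ≤ (x - α*u) ^ γ ∧ (x - α*u) ^ γ ≤ x ^ γ ∧ 0 < x - α*u := by
    intro u hu
    obtain ⟨hu0, hux⟩ := hu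
    have h1 : (1-α)*x ≤ x - α*u := by nlinarith
    have h3 : 0 < x - α*u := by nlinarith
    have h2 : x - α*u ≤ x := by nlinarith
    exact ⟨Real.rpow_le_rpow (by positivity) h1 hγ.le,
      Real.rpow_le_rpow h3.le h2 hγ.le, h3⟩
  have hmeas : AEStronglyMeasurable (fun u => h u / (x - α*u) ^ γ)
      (volume.restrict (Set.Ioo 0 x)) := by
    have hc : ContinuousOn (fun u : ℝ => ((x - α*u) ^ γ)⁻¹) (Set.Ioo 0 x) :=
      ContinuousOn.inv₀
        (ContinuousOn.rpow_const
          ((continuous_const.sub (continuous_const.mul continuous_id)).continuousOn)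
          fun u hu => Or.inl (key u hu).2.2.ne')
        fun u hu => (lt_of_lt_of_le hcpos (key u hu).1).ne'
    simp only [div_eq_mul_inv]
    exact hintx.1.mul (hc.aestronglyMeasurable measurableSet_Ioo)
  have hgint : IntegrableOn (fun u => h u / (x - α*u) ^ γ) (Set.Ioo 0 x) := by
    refine Integrable.mono (hintx.const_mul (((1-α)*x) ^ γ)⁻¹) hmeas ?_
    filter_upwards [ae_restrict_mem measurableSet_Ioo] with u hu
    obtain ⟨k1, k2, k3⟩ := key u hu
    have hpu := hpos u
    have hdg : (0:ℝ) < (x - α*u) ^ γ := lt_of_lt_of_le hcpos k1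
    rw [Real.norm_eq_abs, Real.norm_eq_abs, abs_of_nonneg (by positivity),
      abs_of_nonneg (by positivity)]
    rw [div_eq_mul_inv, mul_comm]
    gcongr
  have hglow : IntegrableOn (fun u => h u / x ^ γ) (Set.Ioo 0 x) := hintx.div_const _
  have hghigh : IntegrableOn (fun u => h u / ((1-α)*x) ^ γ) (Set.Ioo 0 x) := hintx.div_const _
  have hlo : (∫ u in Set.Ioo (0:ℝ) x, h u / x ^ γ)
      ≤ ∫ u in Set.Ioo (0:ℝ) x, h u / (x - α*u) ^ γ := by
    refine setIntegral_mono_on hglow hgint measurableSet_Ioo ?_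
    intro u hu
    obtain ⟨k1, k2, k3⟩ := key u hu
    have hdg : (0:ℝ) < (x - α*u) ^ γ := lt_of_lt_of_le hcpos k1
    have hpu := hpos u
    gcongr
  have hhi : (∫ u in Set.Ioo (0:ℝ) x, h u / (x - α*u) ^ γ)
      ≤ ∫ u in Set.Ioo (0:ℝ) x, h u / ((1-α)*x) ^ γ := by
    refine setIntegral_mono_on hgint hghigh measurableSet_Ioo ?_
    intro u hu
    obtain ⟨k1, k2, k3⟩ := key u hu
    have hdg : (0:ℝ) < (x - α*u) ^ γ := lt_of_lt_of_le hcpos k1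
    have hpu := hpos u
    gcongr
  have hIlo : (∫ u in Set.Ioo (0:ℝ) x, h u / x ^ γ) = f x / x ^ γ := by
    rw [integral_div, hf]
  have hIhi : (∫ u in Set.Ioo (0:ℝ) x, h u / ((1-α)*x) ^ γ) = f x / ((1-α)*x) ^ γ := by
    rw [integral_div, hf]
  rw [hIlo] at hlo
  rw [hIhi] at hhi
  have hγx : (0:ℝ) ≤ γ / x := by positivity
  have heq := heqn x hx
  have hxpow : x ^ (-γ - 1) = (x ^ γ * x)⁻¹ := by
    rw [show -γ - 1 = -(γ + 1) by ring, Real.rpow_neg hx.le, Real.rpow_add hx,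
      Real.rpow_one]
  constructor
  · have := mul_le_mul_of_nonneg_left hlo hγx
    rw [← heq] at this
    refine le_trans (le_of_eq ?_) this
    rw [hxpow]
    field_simp
  · have := mul_le_mul_of_nonneg_left hhi hγx
    rw [← heq] at this
    refine le_trans this (le_of_eq ?_)
    rw [hxpow, Real.mul_rpow h1α.le hx.le, Real.rpow_neg h1α.le]
    have h1g : (0:ℝ) < (1-α) ^ γ := Real.rpow_pos_of_pos h1α γ
    field_simp
end

section
/- Under the hypotheses of the previous bound, the CDF f of the density h satisfies exp(−(1−α)^(−γ) x^(−γ)) ≤ f(x) ≤ exp(−x^(−γ)) for all x > 0, and consequently γ x^(−γ−1) exp(−(1−α)^(−γ) x^(−γ)) ≤ h(x) ≤ γ (1−α)^(−γ) x^(−γ−1) exp(−x^(−γ)). -/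
/-!
The integral equation sandwiches the kernel: for `0 < u < x` we have
`(1 - α) x ≤ x - α u ≤ x`, so `γ x^(-γ-1) f(x) ≤ h(x) ≤ γ (1-α)^(-γ) x^(-γ-1) f(x)`.
Since `f' = h`, this says that `f(x) exp(x^(-γ))` is nondecreasing and
`f(x) exp((1-α)^(-γ) x^(-γ))` is nonincreasing on `(0, ∞)`; both tend to `1` at infinity,
which gives the bounds on `f`, and substituting them back gives the bounds on `h`.
-/

open MeasureTheory Real Filter Set Topology

section IntegralEquation

variable {α γ x : ℝ} {h : ℝ → ℝ}

lemma sub_mul_pos_of_mem_Icc (hα1 : α < 1) (hx : 0 < x) {u : ℝ} (hu : u ∈ Icc 0 x) :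
    0 < x - α * u := by
  rcases le_or_gt 0 α with hα | hα
  · nlinarith [hu.1, hu.2]
  · nlinarith [hu.1]

lemma integrableOn_div_rpow_sub_mul (hα1 : α < 1) (hx : 0 < x) (hint : IntegrableOn h (Ioo 0 x)) :
    IntegrableOn (fun u => h u / (x - α * u) ^ γ) (Ioo 0 x) := by
  have hcont : ContinuousOn (fun u => ((x - α * u) ^ γ)⁻¹) (Icc 0 x) := by
    refine ContinuousOn.inv₀ ?_ fun u hu =>
      (rpow_pos_of_pos (sub_mul_pos_of_mem_Icc hα1 hx hu) γ).ne'
    exact (continuousOn_const.sub (continuousOn_const.mul continuousOn_id)).rpow_const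
      fun u hu => Or.inl (sub_mul_pos_of_mem_Icc hα1 hx hu).ne'
  simpa only [div_eq_mul_inv] using
    hint.mul_continuousOn_of_subset hcont measurableSet_Ioo isCompact_Icc Ioo_subset_Icc_self

lemma setIntegral_div_rpow_le (hα : 0 ≤ α) (hα1 : α < 1) (hγ : 0 ≤ γ) (hx : 0 < x)
    (hpos : ∀ u, 0 ≤ h u) (hint : IntegrableOn h (Ioo 0 x)) :
    (∫ u in Ioo 0 x, h u) / x ^ γ ≤ ∫ u in Ioo 0 x, h u / (x - α * u) ^ γ := by
  rw [← integral_div]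
  refine setIntegral_mono_on (hint.div_const _) (integrableOn_div_rpow_sub_mul hα1 hx hint)
    measurableSet_Ioo fun u hu => ?_
  have hd := sub_mul_pos_of_mem_Icc hα1 hx (Ioo_subset_Icc_self hu)
  exact div_le_div_of_nonneg_left (hpos u) (rpow_pos_of_pos hd γ)
    (rpow_le_rpow hd.le (by nlinarith [hu.1]) hγ)

lemma setIntegral_div_rpow_le_div (hα : 0 ≤ α) (hα1 : α < 1) (hγ : 0 ≤ γ) (hx : 0 < x)
    (hpos : ∀ u, 0 ≤ h u) (hint : IntegrableOn h (Ioo 0 x)) :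
    ∫ u in Ioo 0 x, h u / (x - α * u) ^ γ ≤ (∫ u in Ioo 0 x, h u) / ((1 - α) * x) ^ γ := by
  rw [← integral_div]
  refine setIntegral_mono_on (integrableOn_div_rpow_sub_mul hα1 hx hint) (hint.div_const _)
    measurableSet_Ioo fun u hu => ?_
  have hd : 0 < (1 - α) * x := mul_pos (sub_pos.2 hα1) hx
  exact div_le_div_of_nonneg_left (hpos u) (rpow_pos_of_pos hd γ)
    (rpow_le_rpow hd.le (by nlinarith [hu.2]) hγ)

lemma rpow_neg_sub_one (hx : 0 < x) : x ^ (-γ - 1) = (x ^ γ * x)⁻¹ := by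
  rw [show -γ - 1 = -(γ + 1) by ring, rpow_neg hx.le, rpow_add hx, rpow_one]

variable (hα : 0 ≤ α) (hα1 : α < 1) (hγ : 0 ≤ γ) (hx : 0 < x)
  (hpos : ∀ u, 0 ≤ h u) (hint : IntegrableOn h (Ioo 0 x))
  (heqn : h x = (γ / x) * ∫ u in Ioo 0 x, h u / (x - α * u) ^ γ)
include hα hα1 hγ hx hpos hint heqn

lemma mul_rpow_mul_setIntegral_le_of_eq :
    γ * x ^ (-γ - 1) * ∫ u in Ioo 0 x, h u ≤ h x := by
  calc γ * x ^ (-γ - 1) * ∫ u in Ioo 0 x, h u = γ / x * ((∫ u in Ioo 0 x, h u) / x ^ γ) := by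
        rw [rpow_neg_sub_one hx]; field_simp
    _ ≤ h x := heqn ▸ mul_le_mul_of_nonneg_left
        (setIntegral_div_rpow_le hα hα1 hγ hx hpos hint) (div_nonneg hγ hx.le)

lemma le_mul_rpow_mul_setIntegral_of_eq :
    h x ≤ γ * (1 - α) ^ (-γ) * x ^ (-γ - 1) * ∫ u in Ioo 0 x, h u := by
  have h1α : 0 < 1 - α := sub_pos.2 hα1
  calc h x ≤ γ / x * ((∫ u in Ioo 0 x, h u) / ((1 - α) * x) ^ γ) := heqn ▸
        mul_le_mul_of_nonneg_left (setIntegral_div_rpow_le_div hα hα1 hγ hx hpos hint)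
          (div_nonneg hγ hx.le)
    _ = γ * (1 - α) ^ (-γ) * x ^ (-γ - 1) * ∫ u in Ioo 0 x, h u := by
        rw [rpow_neg_sub_one hx, rpow_neg h1α.le, mul_rpow h1α.le hx.le]; field_simp

end IntegralEquation

section Comparison

variable {f h : ℝ → ℝ} {γ b L x : ℝ}

lemma hasDerivAt_mul_exp_mul_rpow_neg {f' y : ℝ} (hf : HasDerivAt f f' y) (hy : 0 < y) :
    HasDerivAt (fun y => f y * exp (b * y ^ (-γ)))
      (exp (b * y ^ (-γ)) * (f' - b * γ * y ^ (-γ - 1) * f y)) y := by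
  have hexp := ((hasDerivAt_rpow_const (p := -γ) (Or.inl hy.ne')).const_mul b).exp
  exact (hf.mul hexp).congr_deriv (by ring)

lemma le_mul_exp_neg_mul_rpow_of_hasDerivAt (hγ : 0 < γ)
    (hderiv : ∀ y > 0, HasDerivAt f (h y) y) (hlim : Tendsto f atTop (𝓝 L))
    (hbound : ∀ y > 0, b * γ * y ^ (-γ - 1) * f y ≤ h y) (hx : 0 < x) :
    f x ≤ L * exp (-b * x ^ (-γ)) := by
  set F := fun y => f y * exp (b * y ^ (-γ))
  have hmono : MonotoneOn F (Ioi 0) := by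
    have hF : ∀ y > 0, HasDerivAt F (exp (b * y ^ (-γ)) * (h y - b * γ * y ^ (-γ - 1) * f y)) y :=
      fun y hy => hasDerivAt_mul_exp_mul_rpow_neg (hderiv y hy) hy
    refine monotoneOn_of_hasDerivWithinAt_nonneg (convex_Ioi 0)
      (fun y hy => (hF y hy).continuousAt.continuousWithinAt)
      (fun y hy => (hF y (interior_subset hy)).hasDerivWithinAt) fun y hy => ?_
    rw [interior_Ioi] at hy
    exact mul_nonneg (exp_pos _).le (sub_nonneg.2 (hbound y hy))
  have hFlim : Tendsto F atTop (𝓝 L) := by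
    have := hlim.mul (((tendsto_rpow_neg_atTop hγ).const_mul b).rexp)
    simpa using this
  have hFx : F x ≤ L := ge_of_tendsto hFlim <| by
    filter_upwards [eventually_ge_atTop x] with y hy
    exact hmono hx (lt_of_lt_of_le hx hy) hy
  rw [neg_mul, exp_neg, ← div_eq_mul_inv, le_div_iff₀ (exp_pos _)]
  exact hFx

lemma mul_exp_neg_mul_rpow_le_of_hasDerivAt (hγ : 0 < γ)
    (hderiv : ∀ y > 0, HasDerivAt f (h y) y) (hlim : Tendsto f atTop (𝓝 L))
    (hbound : ∀ y > 0, h y ≤ b * γ * y ^ (-γ - 1) * f y) (hx : 0 < x) :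
    L * exp (-b * x ^ (-γ)) ≤ f x := by
  have := le_mul_exp_neg_mul_rpow_of_hasDerivAt (f := -f) (h := -h) hγ
    (fun y hy => (hderiv y hy).neg) hlim.neg (fun y hy => by simpa using hbound y hy) hx
  simpa [neg_mul] using this

end Comparison

theorem density_exponential_bounds_general (α γ : ℝ) (hα : 0 < α) (hα1 : α < 1) (hγ : 0 < γ)
    (h : ℝ → ℝ)
    (hpos : ∀ x, 0 ≤ h x)
    (hint : IntegrableOn h (Set.Ioi (0 : ℝ)))
    (heqn : ∀ x > (0 : ℝ), h x = (γ / x) * ∫ u in Set.Ioo (0 : ℝ) x, h u / (x - α * u) ^ γ)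
    (f : ℝ → ℝ)
    (hf : ∀ x, f x = ∫ u in Set.Ioo (0 : ℝ) x, h u)
    (hderiv : ∀ x > (0 : ℝ), HasDerivAt f (h x) x)
    (hlim : Tendsto f atTop (nhds 1)) :
    ∀ x > (0 : ℝ),
      (Real.exp (-(1 - α) ^ (-γ) * x ^ (-γ)) ≤ f x ∧ f x ≤ Real.exp (-x ^ (-γ))) ∧
      (γ * x ^ (-γ - 1) * Real.exp (-(1 - α) ^ (-γ) * x ^ (-γ)) ≤ h x ∧
        h x ≤ γ * (1 - α) ^ (-γ) * x ^ (-γ - 1) * Real.exp (-x ^ (-γ))) := by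
  have hsandwich : ∀ y > 0, γ * y ^ (-γ - 1) * f y ≤ h y ∧
      h y ≤ γ * (1 - α) ^ (-γ) * y ^ (-γ - 1) * f y := fun y hy => by
    have hint' : IntegrableOn h (Ioo 0 y) := hint.mono_set Ioo_subset_Ioi_self
    rw [hf]
    exact ⟨mul_rpow_mul_setIntegral_le_of_eq hα.le hα1 hγ.le hy hpos hint' (heqn y hy),
      le_mul_rpow_mul_setIntegral_of_eq hα.le hα1 hγ.le hy hpos hint' (heqn y hy)⟩
  intro x hx
  have hfub : f x ≤ exp (-x ^ (-γ)) := by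
    simpa using le_mul_exp_neg_mul_rpow_of_hasDerivAt (b := 1) hγ hderiv hlim
      (fun y hy => by simpa using (hsandwich y hy).1) hx
  have hflb : exp (-(1 - α) ^ (-γ) * x ^ (-γ)) ≤ f x := by
    simpa using mul_exp_neg_mul_rpow_le_of_hasDerivAt hγ hderiv hlim
      (fun y hy => by linarith [(hsandwich y hy).2]) hx
  have hc : 0 ≤ (1 - α) ^ (-γ) := rpow_nonneg (by linarith) _
  refine ⟨⟨hflb, hfub⟩, ?_, ?_⟩
  · exact le_trans (by gcongr) (hsandwich x hx).1
  · exact (hsandwich x hx).2.trans (by gcongr)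

theorem density_exponential_bounds (α γ : ℝ) (hα : 0 < α) (hα1 : α < 1) (hγ : 0 < γ)
    (h : ℝ → ℝ)
    (hpos : ∀ x, 0 ≤ h x)
    (hint : IntegrableOn h (Set.Ioi (0 : ℝ)))
    (hnorm : ∫ u in Set.Ioi (0 : ℝ), h u = 1)
    (heqn : ∀ x > (0 : ℝ), h x = (γ / x) * ∫ u in Set.Ioo (0 : ℝ) x, h u / (x - α * u) ^ γ)
    (f : ℝ → ℝ)
    (hf : ∀ x, f x = ∫ u in Set.Ioo (0 : ℝ) x, h u)
    (hcont : Continuous h)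
    (hderiv : ∀ x > (0 : ℝ), HasDerivAt f (h x) x)
    (hlim : Tendsto f atTop (nhds 1)) :
    ∀ x > (0 : ℝ),
      (Real.exp (-(1 - α) ^ (-γ) * x ^ (-γ)) ≤ f x ∧ f x ≤ Real.exp (-x ^ (-γ))) ∧
      (γ * x ^ (-γ - 1) * Real.exp (-(1 - α) ^ (-γ) * x ^ (-γ)) ≤ h x ∧
        h x ≤ γ * (1 - α) ^ (-γ) * x ^ (-γ - 1) * Real.exp (-x ^ (-γ))) :=
  density_exponential_bounds_general α γ hα hα1 hγ h hpos hint heqn f hf hderiv hlim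
end

section
/- For γ > 0, 0 < α < 1 and j a nonnegative integer, the quantity F_j := ₂F₁(γ, jγ; 1+jγ; α) has the integral representation F_j = (1−α)^(−γ) − αγ ∫₀¹ u^(jγ) (1−αu)^(−γ−1) du. -/
open MeasureTheory Real

/-- The Pochhammer symbol `(a)_k = a (a+1) ⋯ (a+k-1)` for a real number `a`. -/
def pochR (a : ℝ) (k : ℕ) : ℝ := ∏ i ∈ Finset.range k, (a + (i : ℝ))

/-!
Expanding `(1 - αu)^(-γ-1)` by the binomial series and integrating termwise against `u^(jγ)`
gives `∑ₖ (γ+1)ₖ/k! αᵏ/(jγ+k+1)`. Since `(jγ)ₖ₊₁/(1+jγ)ₖ₊₁ = jγ/(jγ+k+1) = 1 - (k+1)/(jγ+k+1)`,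
the `(k+1)`-st term of `F_j` is the `(k+1)`-st term of the binomial series of `(1-α)^(-γ)`
minus `αγ` times the `k`-th term of that integrated series.
-/

lemma pochR_zero (a : ℝ) : pochR a 0 = 1 := rfl

lemma pochR_succ (a : ℝ) (k : ℕ) : pochR a (k + 1) = pochR a k * (a + k) :=
  Finset.prod_range_succ _ _

lemma pochR_succ' (a : ℝ) (k : ℕ) : pochR a (k + 1) = a * pochR (a + 1) k := by
  simp only [pochR, Finset.prod_range_succ', Nat.cast_add, Nat.cast_one, Nat.cast_zero, add_zero]
  rw [mul_comm]
  exact congrArg (a * ·) (Finset.prod_congr rfl fun _ _ ↦ by ring)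

lemma pochR_nonneg {a : ℝ} (ha : 0 ≤ a) (k : ℕ) : 0 ≤ pochR a k :=
  Finset.prod_nonneg fun _ _ ↦ by positivity

lemma pochR_pos {a : ℝ} (ha : 0 < a) (k : ℕ) : 0 < pochR a k :=
  Finset.prod_pos fun _ _ ↦ by positivity

lemma pochR_eq_ascPochhammer_eval (a : ℝ) (k : ℕ) : pochR a k = (ascPochhammer ℝ k).eval a := by
  induction k with
  | zero => simp [pochR]
  | succ k ih => rw [ascPochhammer_succ_eval, ← ih, pochR_succ]

lemma pochR_div_factorial_eq_choose (a : ℝ) (k : ℕ) :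
    pochR a k / k.factorial = Ring.choose (a + k - 1) k := by
  rw [Ring.choose_eq_smul, Polynomial.descPochhammer_smeval_eq_ascPochhammer,
    Polynomial.ascPochhammer_smeval_eq_eval, pochR_eq_ascPochhammer_eval, smul_eq_mul]
  ring_nf

theorem hasSum_pochR_div_factorial_mul_pow (a : ℝ) {x : ℝ} (hx : |x| < 1) :
    HasSum (fun k ↦ pochR a k / k.factorial * x ^ k) ((1 - x) ^ (-a)) := by
  have h := (Real.one_div_one_sub_rpow_hasFPowerSeriesOnBall_zero a).hasSum
    (y := x) (by simpa [enorm_eq_nnnorm, ← NNReal.coe_lt_one] using hx)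
  simp only [FormalMultilinearSeries.ofScalars_apply_eq, smul_eq_mul, zero_add] at h
  rw [rpow_neg (by linarith [le_abs_self x]), ← one_div]
  simpa only [pochR_div_factorial_eq_choose] using h

theorem integral_Ioo_zero_one_rpow {s : ℝ} (hs : -1 < s) :
    ∫ u in Set.Ioo (0 : ℝ) 1, u ^ s = 1 / (s + 1) := by
  rw [← integral_Ioc_eq_integral_Ioo, ← intervalIntegral.integral_of_le zero_le_one,
    integral_rpow (Or.inl hs), one_rpow, zero_rpow (by linarith), sub_zero]

lemma hasSum_rpow_mul_one_sub_mul_rpow_neg (b c : ℝ) {α u : ℝ} (hu : 0 < u)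
    (hαu : |α * u| < 1) :
    HasSum (fun k ↦ pochR c k / k.factorial * α ^ k * u ^ (b + k))
      (u ^ b * (1 - α * u) ^ (-c)) := by
  have hterm (k : ℕ) : u ^ b * (pochR c k / k.factorial * (α * u) ^ k) =
      pochR c k / k.factorial * α ^ k * u ^ (b + k) := by
    rw [rpow_add hu, rpow_natCast, mul_pow]
    ring
  simpa only [hterm] using (hasSum_pochR_div_factorial_mul_pow c hαu).mul_left (u ^ b)

/-- Termwise integration is justified by the summability of the integrals of the (nonnegative)
terms, which are dominated by `1/(b+1)` times the binomial series of `(1-α)^(-c)`. -/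
theorem hasSum_integral_rpow_mul_one_sub_mul_rpow_neg {b c α : ℝ} (hb : -1 < b) (hc : 0 ≤ c)
    (hα : 0 ≤ α) (hα1 : α < 1) :
    HasSum (fun k ↦ pochR c k / k.factorial * α ^ k / (b + k + 1))
      (∫ u in Set.Ioo (0 : ℝ) 1, u ^ b * (1 - α * u) ^ (-c)) := by
  set F : ℕ → ℝ → ℝ := fun k u ↦ pochR c k / k.factorial * α ^ k * u ^ (b + k)
  have hcoef (k : ℕ) : 0 ≤ pochR c k / k.factorial * α ^ k := by
    have := pochR_nonneg hc k; positivity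
  have hexp (k : ℕ) : -1 < b + k := by linarith [k.cast_nonneg (α := ℝ)]
  have hF_int (k : ℕ) : IntegrableOn (F k) (Set.Ioo 0 1) :=
    ((intervalIntegral.integrableOn_Ioo_rpow_iff one_pos).mpr (hexp k)).const_mul _
  have hF_integral (k : ℕ) : ∫ u in Set.Ioo (0 : ℝ) 1, F k u =
      pochR c k / k.factorial * α ^ k / (b + k + 1) := by
    rw [integral_const_mul, integral_Ioo_zero_one_rpow (hexp k), mul_one_div]
  have hF_norm (k : ℕ) : ∫ u in Set.Ioo (0 : ℝ) 1, ‖F k u‖ = ∫ u in Set.Ioo (0 : ℝ) 1, F k u :=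
    setIntegral_congr_fun measurableSet_Ioo fun u hu ↦
      norm_of_nonneg (mul_nonneg (hcoef k) (rpow_nonneg hu.1.le _))
  have hsummable : Summable fun k : ℕ ↦ pochR c k / k.factorial * α ^ k / (b + k + 1) := by
    refine Summable.of_nonneg_of_le (fun k ↦ div_nonneg (hcoef k) (by linarith [hexp k]))
      (fun k ↦ div_le_div_of_nonneg_left (hcoef k) (by linarith) (by linarith [hexp k]))
      ((hasSum_pochR_div_factorial_mul_pow c (x := α) ?_).summable.div_const (b + 1))
    rwa [abs_of_nonneg hα]
  have h := hasSum_integral_of_summable_integral_norm hF_int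
    (by simpa only [hF_norm, hF_integral] using hsummable)
  simp only [hF_integral] at h
  rwa [setIntegral_congr_fun measurableSet_Ioo fun u hu ↦
    (hasSum_rpow_mul_one_sub_mul_rpow_neg b c hu.1 ?_).tsum_eq] at h
  rw [abs_of_nonneg (mul_nonneg hα hu.1.le)]
  nlinarith [hu.2]

lemma pochR_mul_pochR_div_one_add_succ (a b x : ℝ) (hb : 0 ≤ b) (k : ℕ) :
    pochR a (k + 1) * pochR b (k + 1) / ((k + 1).factorial * pochR (1 + b) (k + 1)) * x ^ (k + 1) =
      pochR a (k + 1) / (k + 1).factorial * x ^ (k + 1) -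
        x * a * (pochR (a + 1) k / k.factorial * x ^ k / (b + k + 1)) := by
  have := pochR_pos (by linarith : 0 < 1 + b) k
  rw [pochR_succ' a, pochR_succ' b, pochR_succ (1 + b), add_comm b 1, Nat.factorial_succ]
  push_cast
  field_simp
  ring

theorem F_integral_representation (γ α : ℝ) (hγ : 0 < γ) (hα : 0 < α) (hα1 : α < 1)
    (j : ℕ) :
    (∑' k : ℕ,
        pochR γ k * pochR (j * γ) k / ((k.factorial : ℝ) * pochR (1 + j * γ) k) * α ^ k) =
      (1 - α) ^ (-γ) - α * γ * ∫ u in Set.Ioo (0 : ℝ) 1, u ^ (j * γ) * (1 - α * u) ^ (-γ - 1) := by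
  have hjγ : 0 ≤ (j : ℝ) * γ := by positivity
  have hA := hasSum_pochR_div_factorial_mul_pow γ (x := α) (by rwa [abs_of_pos hα])
  have hB := (hasSum_integral_rpow_mul_one_sub_mul_rpow_neg (b := j * γ) (by linarith)
    (by linarith : 0 ≤ γ + 1) hα.le hα1).mul_left (α * γ)
  have h := ((hasSum_nat_add_iff' 1).mpr hA).sub hB
  rw [show -γ - 1 = -(γ + 1) by ring]
  refine ((hasSum_nat_add_iff' 1).mp ?_).tsum_eq
  convert h using 1
  · funext k
    exact pochR_mul_pochR_div_one_add_succ γ _ α hjγ k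
  · simp only [Finset.range_one, Finset.sum_singleton, pochR_zero, Nat.factorial_zero,
      Nat.cast_one, pow_zero]
    ring
end

section
/- For 0 < γ < 1, the function H₁(s) = (Γ(1−γ))^((s−1)/γ) Γ((1+γ−s)/γ) / Γ(2−s) satisfies the complex functional equation H₁(s) = (γ Γ(1−γ) Γ(1+γ−s)/Γ(2−s)) H₁(s−γ) for all s ∈ ℂ with Re(s) < 1+γ avoiding poles of the Gamma factors. -/
open Complex

theorem H1_functional_equation (γ : ℝ) (hγ0 : 0 < γ) (hγ1 : γ < 1)
    (s : ℂ) (hs : s.re < 1 + γ)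
    (h2s : ∀ n : ℕ, 2 - s ≠ -(n : ℂ))
    (h2sg : ∀ n : ℕ, 2 - (s - (γ : ℂ)) ≠ -(n : ℂ))
    (H₁ : ℂ → ℂ)
    (hH : ∀ z : ℂ, H₁ z =
      ((Real.Gamma (1 - γ) : ℂ)) ^ ((z - 1) / (γ : ℂ)) *
        Complex.Gamma ((1 + (γ : ℂ) - z) / (γ : ℂ)) / Complex.Gamma (2 - z)) :
    H₁ s = (γ : ℂ) * (Real.Gamma (1 - γ) : ℂ) * Complex.Gamma (1 + (γ : ℂ) - s) /
        Complex.Gamma (2 - s) * H₁ (s - (γ : ℂ)) := by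
  have hγ : (γ : ℂ) ≠ 0 := by exact_mod_cast hγ0.ne'
  have hC : (Real.Gamma (1 - γ) : ℂ) ≠ 0 := by
    exact_mod_cast (Real.Gamma_pos_of_pos (by linarith)).ne'
  have ha : (1 + (γ : ℂ) - s) ≠ 0 := by
    intro h
    have : (1 + (γ : ℂ) - s).re = 0 := by rw [h]; simp
    simp [Complex.sub_re, Complex.add_re] at this
    linarith
  have hare : 0 < (1 + (γ : ℂ) - s).re := by
    simp [Complex.sub_re, Complex.add_re]; linarith
  have hΓa : Complex.Gamma (1 + (γ : ℂ) - s) ≠ 0 :=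
    Complex.Gamma_ne_zero_of_re_pos hare
  have hΓ2s : Complex.Gamma (2 - s) ≠ 0 := Complex.Gamma_ne_zero h2s
  -- Gamma(2 - (s - γ)) = (1+γ-s) * Gamma(1+γ-s)
  have h1 : Complex.Gamma (2 - (s - (γ : ℂ))) = (1 + (γ : ℂ) - s) * Complex.Gamma (1 + (γ : ℂ) - s) := by
    have := Complex.Gamma_add_one (1 + (γ : ℂ) - s) ha
    rw [show (2 : ℂ) - (s - (γ : ℂ)) = 1 + (γ : ℂ) - s + 1 by ring, this]
  -- Gamma((1+γ-(s-γ))/γ) = ((1+γ-s)/γ) * Gamma((1+γ-s)/γ)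
  have haγ : (1 + (γ : ℂ) - s) / (γ : ℂ) ≠ 0 := div_ne_zero ha hγ
  have h2 : Complex.Gamma ((1 + (γ : ℂ) - (s - (γ : ℂ))) / (γ : ℂ)) =
      ((1 + (γ : ℂ) - s) / (γ : ℂ)) * Complex.Gamma ((1 + (γ : ℂ) - s) / (γ : ℂ)) := by
    have := Complex.Gamma_add_one ((1 + (γ : ℂ) - s) / (γ : ℂ)) haγ
    rw [show (1 + (γ : ℂ) - (s - (γ : ℂ))) / (γ : ℂ) = (1 + (γ : ℂ) - s) / (γ : ℂ) + 1 by
      field_simp; ring, this]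
  -- cpow split
  have h3 : ((Real.Gamma (1 - γ) : ℂ)) ^ ((s - (γ : ℂ) - 1) / (γ : ℂ)) =
      ((Real.Gamma (1 - γ) : ℂ)) ^ ((s - 1) / (γ : ℂ)) / (Real.Gamma (1 - γ) : ℂ) := by
    rw [show (s - (γ : ℂ) - 1) / (γ : ℂ) = (s - 1) / (γ : ℂ) - 1 by field_simp; ring,
      Complex.cpow_sub _ _ hC, Complex.cpow_one]
  rw [hH s, hH (s - (γ : ℂ)), h1, h2, h3]
  field_simp
end

section
/- For γ = 1/2, the function h₁(x) = (1/(2 x^(3/2))) exp(−π/(4x)) on (0,∞) satisfies the singular integral equation h₁(x) = (1/(2x)) ∫₀ˣ h₁(u)/√(x−u) du for all x > 0. -/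
/-!
The substitution `u = x / (1 + t)` maps `(0, ∞)` onto `(0, x)` and turns
`∫₀ˣ u^(-3/2) e^(-a/u) (x - u)^(-1/2) du` into
`x⁻¹ e^(-a/x) ∫₀^∞ t^(-1/2) e^(-(a/x) t) dt`, a Gamma integral equal to
`√(π / a) e^(-a/x) / √x`. With `a = π / 4` this gives the equation.
-/

open MeasureTheory Real Set

theorem Real.rpow_three_halves {u : ℝ} (hu : 0 ≤ u) : u ^ ((3 : ℝ) / 2) = u * √u := by
  rw [show (3 : ℝ) / 2 = 1 + 1 / 2 by norm_num, rpow_add' hu (by norm_num), rpow_one,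
    sqrt_eq_rpow]

theorem integral_exp_neg_mul_div_sqrt_Ioi {r : ℝ} (hr : 0 < r) :
    ∫ t in Ioi 0, exp (-(r * t)) / √t = √(π / r) := by
  have hrpow : ∀ t ∈ Ioi (0 : ℝ),
      exp (-(r * t)) / √t = t ^ ((1 : ℝ) / 2 - 1) * exp (-(r * t)) := by
    intro t ht
    rw [show (1 : ℝ) / 2 - 1 = -(1 / 2) by norm_num, rpow_neg ht.le, ← sqrt_eq_rpow,
      div_eq_inv_mul]
  rw [setIntegral_congr_fun measurableSet_Ioi hrpow,
    integral_rpow_mul_exp_neg_mul_Ioi (by norm_num) hr, Gamma_one_half_eq, ← sqrt_eq_rpow,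
    ← sqrt_mul (by positivity), one_div_mul_eq_div]

theorem image_div_one_add_Ioi {x : ℝ} (hx : 0 < x) :
    (fun t : ℝ => x / (1 + t)) '' Ioi 0 = Ioo 0 x := by
  ext u
  simp only [mem_image, mem_Ioi, mem_Ioo]
  constructor
  · rintro ⟨t, ht, rfl⟩
    exact ⟨by positivity, div_lt_self hx (by linarith)⟩
  · rintro ⟨hu, hux⟩
    refine ⟨x / u - 1, by linarith [(one_lt_div hu).mpr hux], ?_⟩
    field_simp
    ring

theorem injOn_div_one_add_Ioi {x : ℝ} (hx : x ≠ 0) :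
    InjOn (fun t : ℝ => x / (1 + t)) (Ioi 0) := by
  intro s hs t ht hst
  simp only [mem_Ioi] at hs ht
  have hs' : 1 + s ≠ 0 := by positivity
  have ht' : 1 + t ≠ 0 := by positivity
  field_simp at hst
  linarith

theorem integral_Ioo_eq_integral_Ioi_div_one_add {E : Type*} [NormedAddCommGroup E]
    [NormedSpace ℝ E] {x : ℝ} (hx : 0 < x) (g : ℝ → E) :
    ∫ u in Ioo 0 x, g u = ∫ t in Ioi 0, (x / (1 + t) ^ 2) • g (x / (1 + t)) := by
  have hderiv : ∀ t ∈ Ioi (0 : ℝ),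
      HasDerivWithinAt (fun t => x / (1 + t)) (-x / (1 + t) ^ 2) (Ioi 0) t := by
    intro t ht
    have h1 : 1 + t ≠ 0 := by rw [mem_Ioi] at ht; positivity
    refine ((hasDerivAt_const t x).div ((hasDerivAt_id t).const_add 1) h1).hasDerivWithinAt
      |>.congr_deriv ?_
    simp
  rw [← image_div_one_add_Ioi hx,
    integral_image_eq_integral_abs_deriv_smul measurableSet_Ioi hderiv
      (injOn_div_one_add_Ioi hx.ne')]
  refine setIntegral_congr_fun measurableSet_Ioi fun t ht => ?_
  rw [mem_Ioi] at ht
  rw [neg_div, abs_neg, abs_of_pos (by positivity)]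

theorem sqrt_div_one_add_mul_sqrt_sub {x t : ℝ} (hx : 0 ≤ x) (ht : 0 ≤ t) :
    √(x / (1 + t)) * √(x - x / (1 + t)) = x / (1 + t) * √t := by
  have h1 : 1 + t ≠ 0 := by positivity
  rw [← sqrt_mul (by positivity),
    show x / (1 + t) * (x - x / (1 + t)) = (x / (1 + t)) ^ 2 * t by field_simp; ring,
    sqrt_mul (sq_nonneg _), sqrt_sq (by positivity)]

theorem integral_Ioo_exp_neg_div_div_sqrt_sub {a x : ℝ} (ha : 0 < a) (hx : 0 < x) :
    ∫ u in Ioo 0 x, exp (-a / u) / (u * √u * √(x - u)) =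
      √(π / a) * exp (-a / x) / √x := by
  have hsubst : ∀ t ∈ Ioi (0 : ℝ),
      (x / (1 + t) ^ 2) • (exp (-a / (x / (1 + t))) /
        (x / (1 + t) * √(x / (1 + t)) * √(x - x / (1 + t)))) =
      exp (-a / x) / x * (exp (-(a / x * t)) / √t) := by
    intro t ht
    rw [mem_Ioi] at ht
    have hexp : exp (-a / (x / (1 + t))) = exp (-a / x) * exp (-(a / x * t)) := by
      rw [← exp_add]
      congr 1
      field_simp
      ring
    have hsqt : √t ≠ 0 := by positivity
    rw [smul_eq_mul, mul_assoc (x / (1 + t)), sqrt_div_one_add_mul_sqrt_sub hx.le ht.le, hexp]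
    field_simp
  rw [integral_Ioo_eq_integral_Ioi_div_one_add hx,
    setIntegral_congr_fun measurableSet_Ioi hsubst, integral_const_mul,
    integral_exp_neg_mul_div_sqrt_Ioi (by positivity), div_div_eq_mul_div, mul_div_right_comm,
    sqrt_mul' _ hx.le]
  have hsqx : √x ^ 2 = x := sq_sqrt hx.le
  field_simp
  rw [hsqx]

theorem h1_half_integral_equation (x : ℝ) (hx : 0 < x) :
    (1 / (2 * x ^ ((3 : ℝ) / 2))) * Real.exp (-π / (4 * x)) =
      (1 / (2 * x)) *
        ∫ u in Set.Ioo (0 : ℝ) x,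
          ((1 / (2 * u ^ ((3 : ℝ) / 2))) * Real.exp (-π / (4 * u))) / Real.sqrt (x - u) := by
  have hexponent (u : ℝ) : -π / (4 * u) = -(π / 4) / u := by ring
  have hintegrand : ∀ u ∈ Ioo (0 : ℝ) x,
      1 / (2 * u ^ ((3 : ℝ) / 2)) * exp (-π / (4 * u)) / √(x - u) =
        1 / 2 * (exp (-(π / 4) / u) / (u * √u * √(x - u))) := by
    intro u hu
    rw [rpow_three_halves hu.1.le, hexponent]
    ring
  have hsqrt : √(π / (π / 4)) = 2 := by
    rw [show π / (π / 4) = 2 ^ 2 by field_simp; norm_num, sqrt_sq zero_le_two]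
  rw [setIntegral_congr_fun measurableSet_Ioo hintegrand, integral_const_mul,
    integral_Ioo_exp_neg_div_div_sqrt_sub (by positivity) hx, hsqrt, rpow_three_halves hx.le,
    hexponent]
  field_simp
end
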